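/- arXiv:2604.17275 — 4 statements merged into one kernel-verified Lean document; each statement's English description precedes it below -/
import Mathlib

section
/- For every p ∈ [0, 1] and every λ ∈ ℝ, (1 − p)·e^{−λp} + p·e^{λ(1−p)} ≤ e^{λ²/8}. -/
/-!
This is Hoeffding's lemma for the centered Bernoulli variable `Z = U - p`: the law of `Z` is the
two-point measure `Ber(1 - p, -p, p)`, which has mean zero and is supported in an interval of
length one, so its moment generating function is sub-Gaussian with variance proxy `(1 / 2) ^ 2`.
-/

open Real MeasureTheory ProbabilityTheory unitInterval

lemma ae_mem_of_mem_of_mem_bernoulliMeasure {X : Type*} [MeasurableSpace X] {x y : X}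
    {s : Set X} (p : I) (hs : MeasurableSet s) (hx : x ∈ s) (hy : y ∈ s) :
    ∀ᵐ z ∂Ber(x, y, p), z ∈ s :=
  ae_iff.2 <| bernoulliMeasure_apply_of_notMem_of_notMem p hs.compl (not_not.2 hx) (not_not.2 hy)

lemma mgf_id_bernoulliMeasure (x y : ℝ) (p : I) (t : ℝ) :
    mgf id Ber(x, y, p) t = p * exp (t * x) + (1 - p) * exp (t * y) := by
  simp only [mgf, id, integral_bernoulliMeasure, smul_eq_mul]

lemma hasSubgaussianMGF_id_bernoulliMeasure_centered (p : I) :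
    HasSubgaussianMGF id (1 / 4) Ber(1 - (p : ℝ), -p, p) := by
  have hmem : ∀ᵐ z ∂Ber(1 - (p : ℝ), -p, p), id z ∈ Set.Icc (-(p : ℝ)) (1 - p) :=
    ae_mem_of_mem_of_mem_bernoulliMeasure p measurableSet_Icc
      ⟨by linarith [p.2.2], le_rfl⟩ ⟨le_rfl, by linarith [p.2.2]⟩
  have hmean : ∫ z, id z ∂Ber(1 - (p : ℝ), -p, p) = 0 := by
    rw [integral_bernoulliMeasure]
    simp only [id, smul_eq_mul]
    ring
  convert hasSubgaussianMGF_of_mem_Icc_of_integral_eq_zero aemeasurable_id hmem hmean using 1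
  rw [sub_neg_eq_add, sub_add_cancel, nnnorm_one]
  norm_num

/-- For every `p ∈ [0,1]` and every real `λ`,
`(1 − p)·e^{−λp} + p·e^{λ(1−p)} ≤ e^{λ²/8}`. -/
theorem bernoulli_mgf_bound (p : ℝ) (hp0 : 0 ≤ p) (hp1 : p ≤ 1) (lam : ℝ) :
    (1 - p) * Real.exp (-lam * p) + p * Real.exp (lam * (1 - p)) ≤
      Real.exp (lam ^ 2 / 8) := by
  calc (1 - p) * Real.exp (-lam * p) + p * Real.exp (lam * (1 - p))
      = mgf id Ber(1 - p, -p, ⟨p, hp0, hp1⟩) lam := by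
        rw [mgf_id_bernoulliMeasure, neg_mul, mul_neg]
        ring
    _ ≤ Real.exp (((1 / 4 : NNReal) : ℝ) * lam ^ 2 / 2) :=
        (hasSubgaussianMGF_id_bernoulliMeasure_centered ⟨p, hp0, hp1⟩).mgf_le lam
    _ = Real.exp (lam ^ 2 / 8) := by
        congr 1
        push_cast
        ring
end

section
/- Let X_1, …, X_N be independent identically distributed {0,1}-valued random variables with P(X_i = 1) = p, let X̄ = (1/N)∑_{i=1}^N X_i, and let e := |X̄ − p|. Set ν = b = 4e²_⋆/√N, where e_⋆ denotes Euler's number. Then for all λ ∈ [0, 1/b], E[exp(λ(e − E[e]))] ≤ exp(λ²ν²/2). -/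
open MeasureTheory ProbabilityTheory

/-!
The error is `e = f (X₁ + ⋯ + X_N)` with `f t = |t / N - p|`, and `f` changes by at most `1 / N`
when its argument moves by one. Conditioning on one Bernoulli variable at a time (a Doob martingale
argument), each step costs a factor `exp (λ² / (8 N²))` by Hoeffding's lemma, as in McDiarmid's
inequality. Hence `e - E e` is even sub-Gaussian with variance proxy `1 / (4 N) ≤ ν²`, for
every `λ`.
-/

section

open Real Set

lemma mem_Icc_zero_one_of_eq_zero_or_eq_one {x : ℝ} (h : x = 0 ∨ x = 1) : x ∈ Icc (0 : ℝ) 1 := by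
  rcases h with rfl | rfl <;> simp

lemma sum_mem_Icc_of_eq_zero_or_eq_one {ι α : Type*} {X : ι → α → ℝ}
    (h01 : ∀ i x, X i x = 0 ∨ X i x = 1) (s : Finset ι) (x : α) :
    ∑ i ∈ s, X i x ∈ Icc 0 (s.card : ℝ) := by
  have hX := fun i ↦ mem_Icc_zero_one_of_eq_zero_or_eq_one (h01 i x)
  constructor
  · exact Finset.sum_nonneg fun i _ ↦ (hX i).1
  · simpa using Finset.sum_le_card_nsmul s _ 1 fun i _ ↦ (hX i).2

variable {Ω : Type*} [MeasurableSpace Ω] {μ : Measure Ω}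

lemma integrable_comp_of_mem_Icc [IsFiniteMeasure μ] {g : ℝ → ℝ} (hg : Continuous g)
    {T : Ω → ℝ} (hT : Measurable T) {a b : ℝ} (hTab : ∀ ω, T ω ∈ Icc a b) :
    Integrable (fun ω ↦ g (T ω)) μ := by
  obtain ⟨C, hC⟩ := isCompact_Icc.exists_bound_of_continuousOn hg.continuousOn
  exact .of_bound (hg.measurable.comp hT).aestronglyMeasurable C
    (ae_of_all _ fun ω ↦ hC _ (hTab ω))

variable [IsProbabilityMeasure μ] {X T : Ω → ℝ}

lemma mgf_le_exp_mul_integral_add_of_mem_Icc (hX : AEMeasurable X μ) {a b : ℝ}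
    (hab : ∀ᵐ ω ∂μ, X ω ∈ Icc a b) (t : ℝ) :
    mgf X μ t ≤ exp (t * μ[X] + (b - a) ^ 2 * t ^ 2 / 8) := by
  have hoeffding := (hasSubgaussianMGF_of_mem_Icc hX hab).mgf_le t
  calc mgf X μ t = mgf (fun ω ↦ X ω - μ[X]) μ t * exp (t * μ[X]) := by
        simpa using mgf_add_const (X := fun ω ↦ X ω - μ[X]) (μ := μ) (t := t) μ[X]
    _ ≤ exp ((b - a) ^ 2 * t ^ 2 / 8) * exp (t * μ[X]) := by
        gcongr
        refine hoeffding.trans_eq ?_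
        congr 1
        push_cast [coe_nnnorm, norm_eq_abs, div_pow, sq_abs]
        ring
    _ = exp (t * μ[X] + (b - a) ^ 2 * t ^ 2 / 8) := by rw [add_comm, exp_add]

lemma integral_mem_Icc_of_eq_zero_or_eq_one (hX : Measurable X)
    (h01 : ∀ ω, X ω = 0 ∨ X ω = 1) : μ[X] ∈ Icc 0 1 := by
  have hX01 := fun ω ↦ mem_Icc_zero_one_of_eq_zero_or_eq_one (h01 ω)
  refine ⟨integral_nonneg fun ω ↦ (hX01 ω).1, ?_⟩
  simpa using integral_mono (μ := μ)
    (Integrable.of_mem_Icc 0 1 hX.aemeasurable (ae_of_all _ hX01)) (integrable_const 1)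
    fun ω ↦ (hX01 ω).2

lemma integral_comp_add_of_eq_zero_or_eq_one (hX : Measurable X)
    (h01 : ∀ ω, X ω = 0 ∨ X ω = 1) (hT : Measurable T) {a b : ℝ} (hTab : ∀ ω, T ω ∈ Icc a b)
    (hXT : IndepFun X T μ) {g : ℝ → ℝ} (hg : Continuous g) :
    ∫ ω, g (X ω + T ω) ∂μ = (1 - μ[X]) * ∫ ω, g (T ω) ∂μ + μ[X] * ∫ ω, g (T ω + 1) ∂μ := by
  have hg1 : Continuous fun t ↦ g (t + 1) := hg.comp (continuous_add_const 1)
  have hgT : Integrable (fun ω ↦ g (T ω)) μ := integrable_comp_of_mem_Icc hg hT hTab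
  have hgT1 : Integrable (fun ω ↦ g (T ω + 1)) μ := integrable_comp_of_mem_Icc hg1 hT hTab
  have hX01 := fun ω ↦ mem_Icc_zero_one_of_eq_zero_or_eq_one (h01 ω)
  have hXD : ∫ ω, X ω * (g (T ω + 1) - g (T ω)) ∂μ = μ[X] * ∫ ω, g (T ω + 1) - g (T ω) ∂μ :=
    (hXT.comp measurable_id (hg1.sub hg).measurable).integral_fun_mul_eq_mul_integral
      hX.aestronglyMeasurable (hgT1.sub hgT).aestronglyMeasurable
  have hXDint : Integrable (fun ω ↦ X ω * (g (T ω + 1) - g (T ω))) μ :=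
    (hgT1.sub hgT).bdd_mul (c := 1) hX.aestronglyMeasurable
      (ae_of_all _ fun ω ↦ by simpa [abs_of_nonneg (hX01 ω).1] using (hX01 ω).2)
  have hsplit : ∀ ω, g (X ω + T ω) = g (T ω) + X ω * (g (T ω + 1) - g (T ω)) := fun ω ↦ by
    rcases h01 ω with h | h <;> simp [h, add_comm]
  simp_rw [hsplit]
  rw [integral_add hgT hXDint, hXD, integral_sub hgT1 hgT]
  ring

lemma mgf_eq_of_eq_zero_or_eq_one (hX : Measurable X) (h01 : ∀ ω, X ω = 0 ∨ X ω = 1) (t : ℝ) :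
    mgf X μ t = 1 - μ[X] + μ[X] * exp t := by
  simpa [mgf] using integral_comp_add_of_eq_zero_or_eq_one (μ := μ) hX h01 measurable_const
    (fun _ ↦ left_mem_Icc.2 le_rfl) (indepFun_const_right X 0) (g := fun x ↦ exp (t * x))
    (by fun_prop)

lemma two_point_exp_le_of_eq_zero_or_eq_one (hX : Measurable X)
    (h01 : ∀ ω, X ω = 0 ∨ X ω = 1) (lam a₀ a₁ : ℝ) :
    (1 - μ[X]) * exp (lam * a₀) + μ[X] * exp (lam * a₁) ≤
      exp (lam * ((1 - μ[X]) * a₀ + μ[X] * a₁) + lam ^ 2 * (a₁ - a₀) ^ 2 / 8) := by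
  calc (1 - μ[X]) * exp (lam * a₀) + μ[X] * exp (lam * a₁)
      = exp (lam * a₀) * mgf X μ (lam * (a₁ - a₀)) := by
        rw [mgf_eq_of_eq_zero_or_eq_one hX h01, mul_add, mul_left_comm, ← exp_add]
        ring_nf
    _ ≤ exp (lam * a₀) * exp (lam * (a₁ - a₀) * μ[X] + (lam * (a₁ - a₀)) ^ 2 / 8) := by
        gcongr
        simpa using mgf_le_exp_mul_integral_add_of_mem_Icc hX.aemeasurable
          (ae_of_all _ fun ω ↦ mem_Icc_zero_one_of_eq_zero_or_eq_one (h01 ω)) _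
    _ = _ := by rw [← exp_add]; ring_nf

section BernoulliSum

variable {ι : Type*} {X : ι → Ω → ℝ} (hmeas : ∀ i, Measurable (X i)) (hindep : iIndepFun X μ)
  (h01 : ∀ i ω, X i ω = 0 ∨ X i ω = 1) {c : ℝ} (lam : ℝ) (s : Finset ι) {f : ℝ → ℝ}
  (hf : Continuous f) (hfc : ∀ t, |f (t + 1) - f t| ≤ c)
include hmeas hindep h01 hf hfc

theorem mgf_comp_sum_le_of_eq_zero_or_eq_one :
    mgf (fun ω ↦ f (∑ i ∈ s, X i ω)) μ lam ≤
      exp (lam * ∫ ω, f (∑ i ∈ s, X i ω) ∂μ + s.card * (lam ^ 2 * c ^ 2 / 8)) := by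
  classical
  -- The induction step needs the hypothesis for the shift `f (· + 1)` as well.
  induction s using Finset.induction_on generalizing f with
  | empty => simp [mgf]
  | insert j s hj ih =>
    set T : Ω → ℝ := fun ω ↦ ∑ i ∈ s, X i ω
    have hT : Measurable T := Finset.measurable_fun_sum s fun i _ ↦ hmeas i
    have hXT : IndepFun (X j) T μ := by
      simpa [T, Finset.sum_fn] using (hindep.indepFun_finsetSum_of_notMem hmeas hj).symm
    have hTs := sum_mem_Icc_of_eq_zero_or_eq_one h01 s
    have hf1 : Continuous fun t ↦ f (t + 1) := hf.comp (continuous_add_const 1)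
    simp only [Finset.sum_insert hj, Finset.card_insert_of_notMem hj, mgf]
    rw [integral_comp_add_of_eq_zero_or_eq_one (hmeas j) (h01 j) hT hTs hXT
        (g := fun t ↦ exp (lam * f t)) (by fun_prop),
      integral_comp_add_of_eq_zero_or_eq_one (hmeas j) (h01 j) hT hTs hXT hf]
    set q := μ[X j]
    obtain ⟨hq0, hq1⟩ : q ∈ Icc 0 1 := integral_mem_Icc_of_eq_zero_or_eq_one (hmeas j) (h01 j)
    set A₀ := ∫ ω, f (T ω) ∂μ
    set A₁ := ∫ ω, f (T ω + 1) ∂μ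
    set K := s.card * (lam ^ 2 * c ^ 2 / 8) with hK
    have hA : |A₁ - A₀| ≤ c := by
      rw [← integral_sub (integrable_comp_of_mem_Icc hf1 hT hTs)
        (integrable_comp_of_mem_Icc hf hT hTs)]
      simpa using norm_integral_le_of_norm_le_const (μ := μ)
        (f := fun ω ↦ f (T ω + 1) - f (T ω)) (ae_of_all _ fun ω ↦ hfc (T ω))
    calc (1 - q) * mgf (fun ω ↦ f (T ω)) μ lam + q * mgf (fun ω ↦ f (T ω + 1)) μ lam
        ≤ (1 - q) * exp (lam * A₀ + K) + q * exp (lam * A₁ + K) :=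
          add_le_add (mul_le_mul_of_nonneg_left (ih hf hfc) (by linarith))
            (mul_le_mul_of_nonneg_left (ih hf1 fun t ↦ hfc (t + 1)) hq0)
      _ = exp K * ((1 - q) * exp (lam * A₀) + q * exp (lam * A₁)) := by
          simp only [exp_add]; ring
      _ ≤ exp K * exp (lam * ((1 - q) * A₀ + q * A₁) + lam ^ 2 * (A₁ - A₀) ^ 2 / 8) := by
          gcongr
          exact two_point_exp_le_of_eq_zero_or_eq_one (hmeas j) (h01 j) lam A₀ A₁
      _ ≤ _ := by
          rw [← exp_add, exp_le_exp]
          have := mul_le_mul_of_nonneg_left (sq_le_sq' (abs_le.1 hA).1 (abs_le.1 hA).2)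
            (sq_nonneg lam)
          push_cast
          linarith [hK]

theorem mgf_comp_sum_sub_integral_le_of_eq_zero_or_eq_one :
    mgf (fun ω ↦ f (∑ i ∈ s, X i ω) - ∫ ω, f (∑ i ∈ s, X i ω) ∂μ) μ lam ≤
      exp (s.card * (lam ^ 2 * c ^ 2 / 8)) := by
  simp_rw [sub_eq_add_neg]
  rw [mgf_add_const]
  calc mgf (fun ω ↦ f (∑ i ∈ s, X i ω)) μ lam * exp (lam * -∫ ω, f (∑ i ∈ s, X i ω) ∂μ)
      ≤ exp (lam * ∫ ω, f (∑ i ∈ s, X i ω) ∂μ + s.card * (lam ^ 2 * c ^ 2 / 8)) *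
          exp (lam * -∫ ω, f (∑ i ∈ s, X i ω) ∂μ) := by
        gcongr
        exact mgf_comp_sum_le_of_eq_zero_or_eq_one hmeas hindep h01 lam s hf hfc
    _ = exp (s.card * (lam ^ 2 * c ^ 2 / 8)) := by rw [← exp_add]; ring_nf

end BernoulliSum

end

theorem bernoulli_oracle_error_subexponential_general
    {Ω : Type*} [MeasurableSpace Ω] (μ : Measure Ω) [IsProbabilityMeasure μ]
    (N : ℕ) (p : ℝ)
    (X : Fin N → Ω → ℝ)
    (hmeas : ∀ i, Measurable (X i))
    (hindep : iIndepFun X μ)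
    (h01 : ∀ i ω, X i ω = 0 ∨ X i ω = 1)
    (e : Ω → ℝ) (he : ∀ ω, e ω = |(1 / (N : ℝ)) * ∑ i, X i ω - p|)
    (ν b : ℝ) (hν : ν = 4 * Real.exp 1 ^ 2 / Real.sqrt N) :
    ∀ lam ∈ Set.Icc (0 : ℝ) (1 / b),
      (∫ ω, Real.exp (lam * (e ω - ∫ ω', e ω' ∂μ)) ∂μ) ≤
        Real.exp (lam ^ 2 * ν ^ 2 / 2) := by
  intro lam _
  set f : ℝ → ℝ := fun t ↦ |1 / (N : ℝ) * t - p|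
  have hfc : ∀ t, |f (t + 1) - f t| ≤ 1 / N := fun t ↦
    (abs_abs_sub_abs_le_abs_sub _ _).trans_eq (by simp [mul_add])
  obtain rfl : e = fun ω ↦ f (∑ i, X i ω) := funext he
  have hν2 : (N : ℝ) * (1 / N) ^ 2 ≤ ν ^ 2 := by
    have : (1 : ℝ) ≤ (4 * Real.exp 1 ^ 2) ^ 2 :=
      one_le_pow₀ (by nlinarith [Real.one_le_exp zero_le_one])
    calc (N : ℝ) * (1 / N) ^ 2 = 1 / N := by
          rcases eq_or_ne (N : ℝ) 0 with h | h
          · simp [h]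
          · field_simp
      _ ≤ (4 * Real.exp 1 ^ 2) ^ 2 / N := div_le_div_of_nonneg_right this N.cast_nonneg
      _ = ν ^ 2 := by rw [hν, div_pow, Real.sq_sqrt N.cast_nonneg]
  calc mgf (fun ω ↦ f (∑ i, X i ω) - ∫ ω, f (∑ i, X i ω) ∂μ) μ lam
      ≤ Real.exp (N * (lam ^ 2 * (1 / N) ^ 2 / 8)) := by
        simpa using mgf_comp_sum_sub_integral_le_of_eq_zero_or_eq_one hmeas hindep h01 lam
          Finset.univ (by fun_prop) hfc
    _ ≤ Real.exp (lam ^ 2 * ν ^ 2 / 2) := by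
        gcongr
        nlinarith [mul_le_mul_of_nonneg_left hν2 (sq_nonneg lam)]

/-- Sub-exponential property of the zeroth-order oracle error: for
`e = |X̄ − p|` built from `N` i.i.d. Bernoulli(`p`) samples and
`ν = b = 4e⋆²/√N` (`e⋆` Euler's number), one has
`E[exp(λ(e − E e))] ≤ exp(λ²ν²/2)` for all `λ ∈ [0, 1/b]`. -/
theorem bernoulli_oracle_error_subexponential
    {Ω : Type*} [MeasurableSpace Ω] (μ : Measure Ω) [IsProbabilityMeasure μ]
    (N : ℕ) (hN : 0 < N) (p : ℝ)
    (X : Fin N → Ω → ℝ)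
    (hmeas : ∀ i, Measurable (X i))
    (hindep : iIndepFun X μ)
    (h01 : ∀ i ω, X i ω = 0 ∨ X i ω = 1)
    (hp : ∀ i, μ {ω | X i ω = 1} = ENNReal.ofReal p)
    (e : Ω → ℝ) (he : ∀ ω, e ω = |(1 / (N : ℝ)) * ∑ i, X i ω - p|)
    (ν b : ℝ) (hν : ν = 4 * Real.exp 1 ^ 2 / Real.sqrt N)
    (hb : b = 4 * Real.exp 1 ^ 2 / Real.sqrt N) :
    ∀ lam ∈ Set.Icc (0 : ℝ) (1 / b),
      (∫ ω, Real.exp (lam * (e ω - ∫ ω', e ω' ∂μ)) ∂μ) ≤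
        Real.exp (lam ^ 2 * ν ^ 2 / 2) :=
  bernoulli_oracle_error_subexponential_general μ N p X hmeas hindep h01 e he ν b hν
end

section
/- Let (Ω, F, P) be a probability space, let (F_k)_{k≥0} be a filtration with F_k ⊆ F, and let (Z_k)_{k≥0} be real random variables such that each Z_k is F_{k+1}-measurable. Let ν, b > 0 and suppose that for every k and every λ ∈ [0, 1/b], exp(λZ_k) is integrable and E[exp(λZ_k) | F_k] ≤ exp(λ²ν²) almost surely. Then for every integer t ≥ 1 and every s > 0, P((1/t)∑_{k=0}^{t−1} Z_k > s) ≤ exp(−min{s²t/(4ν²), st/(2b)}). -/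
/-!
Chernoff's method with conditional moment generating functions. For `λ ∈ [0, 1/b]`, conditioning
on `ℱ k` peels the factors of `exp (λ ∑_{k<t} Z k) = ∏_{k<t} exp (λ Z k)` off one at a time, so
its expectation is at most `exp (λ²ν²) ^ t`; Markov's inequality then bounds the tail by
`exp (t (λ²ν² - λ s))`, and `λ = min (s / 2ν²) (1/b)` makes the exponent at most
`-λ s t / 2 = -min (s²t / 4ν²) (st / 2b)`.
-/

open MeasureTheory ProbabilityTheory Finset

namespace MeasureTheory

variable {Ω : Type*} {m mΩ : MeasurableSpace Ω} {μ : Measure Ω} [IsFiniteMeasure μ]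
  {X Y : Ω → ℝ} {C : ℝ}

theorem integral_mul_le_of_condExp_le_of_bdd (hm : m ≤ mΩ) (hX : StronglyMeasurable[m] X)
    (hX0 : 0 ≤ X) {M : ℝ} (hXM : ∀ ω, X ω ≤ M) (hY : Integrable Y μ)
    (hC : ∀ᵐ ω ∂μ, μ[Y|m] ω ≤ C) :
    ∫ ω, X ω * Y ω ∂μ ≤ C * ∫ ω, X ω ∂μ := by
  have hX_norm : ∀ᵐ ω ∂μ, ‖X ω‖ ≤ M := ae_of_all μ fun ω ↦ by
    rw [Real.norm_of_nonneg (hX0 ω)]; exact hXM ω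
  have hX_int : Integrable X μ := .of_bound (hX.mono hm).aestronglyMeasurable M hX_norm
  calc ∫ ω, X ω * Y ω ∂μ = ∫ ω, μ[X * Y|m] ω ∂μ := (integral_condExp hm).symm
    _ = ∫ ω, X ω * μ[Y|m] ω ∂μ := integral_congr_ae <|
        condExp_mul_of_stronglyMeasurable_left hX
          (hY.bdd_mul (hX.mono hm).aestronglyMeasurable hX_norm) hY
    _ ≤ ∫ ω, C * X ω ∂μ := by
        refine integral_mono_ae (integrable_condExp.bdd_mul
          (hX.mono hm).aestronglyMeasurable hX_norm) (hX_int.const_mul C) ?_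
        filter_upwards [hC] with ω hω
        rw [mul_comm C]
        exact mul_le_mul_of_nonneg_left hω (hX0 ω)
    _ = C * ∫ ω, X ω ∂μ := integral_const_mul C X

theorem lintegral_ofReal_mul_le_of_condExp_le (hm : m ≤ mΩ) (hX : StronglyMeasurable[m] X)
    (hX0 : 0 ≤ X) (hY0 : 0 ≤ Y) (hY : Integrable Y μ) (hC : ∀ᵐ ω ∂μ, μ[Y|m] ω ≤ C) :
    ∫⁻ ω, ENNReal.ofReal (X ω * Y ω) ∂μ ≤ ENNReal.ofReal C * ∫⁻ ω, ENNReal.ofReal (X ω) ∂μ := by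
  set Xn : ℕ → Ω → ℝ := fun n ω ↦ min (X ω) n
  have hXn : ∀ n, StronglyMeasurable[m] (Xn n) := fun n ↦
    (continuous_id.min continuous_const).comp_stronglyMeasurable hX
  have hXn0 : ∀ n, 0 ≤ Xn n := fun n ω ↦ le_min (hX0 ω) n.cast_nonneg
  have hXn_norm : ∀ n, ∀ᵐ ω ∂μ, ‖Xn n ω‖ ≤ n := fun n ↦ ae_of_all μ fun ω ↦ by
    rw [Real.norm_of_nonneg (hXn0 n ω)]; exact min_le_right _ _
  have hXn_int : ∀ n, Integrable (Xn n) μ := fun n ↦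
    .of_bound (hXn n |>.mono hm).aestronglyMeasurable n (hXn_norm n)
  have hbound : ∀ n, ∫⁻ ω, ENNReal.ofReal (Xn n ω * Y ω) ∂μ ≤
      ENNReal.ofReal C * ∫⁻ ω, ENNReal.ofReal (X ω) ∂μ := fun n ↦ by
    rw [← ofReal_integral_eq_lintegral_ofReal
      (hY.bdd_mul (hXn n |>.mono hm).aestronglyMeasurable (hXn_norm n))
      (ae_of_all μ fun ω ↦ mul_nonneg (hXn0 n ω) (hY0 ω))]
    calc ENNReal.ofReal (∫ ω, Xn n ω * Y ω ∂μ)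
        ≤ ENNReal.ofReal (C * ∫ ω, Xn n ω ∂μ) := ENNReal.ofReal_le_ofReal <|
          integral_mul_le_of_condExp_le_of_bdd hm (hXn n) (hXn0 n) (fun ω ↦ min_le_right _ _)
            hY hC
      _ = ENNReal.ofReal C * ∫⁻ ω, ENNReal.ofReal (Xn n ω) ∂μ := by
          rw [ENNReal.ofReal_mul' (integral_nonneg (hXn0 n)),
            ofReal_integral_eq_lintegral_ofReal (hXn_int n) (ae_of_all μ (hXn0 n))]
      _ ≤ ENNReal.ofReal C * ∫⁻ ω, ENNReal.ofReal (X ω) ∂μ := by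
          gcongr with ω
          exact min_le_left _ _
  refine le_of_tendsto' (lintegral_tendsto_of_tendsto_of_monotone ?_ ?_ ?_) hbound
  · exact fun n ↦ (((hXn n).mono hm).aestronglyMeasurable.mul hY.1).aemeasurable.ennreal_ofReal
  · refine ae_of_all μ fun ω n k hnk ↦ ENNReal.ofReal_le_ofReal ?_
    exact mul_le_mul_of_nonneg_right (min_le_min le_rfl (Nat.cast_le.mpr hnk)) (hY0 ω)
  · refine ae_of_all μ fun ω ↦ tendsto_const_nhds.congr' ?_
    filter_upwards [tendsto_natCast_atTop_atTop.eventually_ge_atTop (X ω)] with n hn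
    simp only [Xn, min_eq_left hn]

theorem integrable_mul_of_condExp_le (hm : m ≤ mΩ) (hX : StronglyMeasurable[m] X) (hX0 : 0 ≤ X)
    (hX_int : Integrable X μ) (hY0 : 0 ≤ Y) (hY : Integrable Y μ)
    (hC : ∀ᵐ ω ∂μ, μ[Y|m] ω ≤ C) :
    Integrable (fun ω ↦ X ω * Y ω) μ := by
  refine ⟨(hX.mono hm).aestronglyMeasurable.mul hY.1, ?_⟩
  rw [hasFiniteIntegral_iff_ofReal (ae_of_all μ fun ω ↦ mul_nonneg (hX0 ω) (hY0 ω))]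
  refine (lintegral_ofReal_mul_le_of_condExp_le hm hX hX0 hY0 hY hC).trans_lt ?_
  rw [← ofReal_integral_eq_lintegral_ofReal hX_int (ae_of_all μ hX0)]
  exact ENNReal.mul_lt_top ENNReal.ofReal_lt_top ENNReal.ofReal_lt_top

theorem integral_mul_le_of_condExp_le (hm : m ≤ mΩ) (hX : StronglyMeasurable[m] X) (hX0 : 0 ≤ X)
    (hX_int : Integrable X μ) (hY0 : 0 ≤ Y) (hY : Integrable Y μ) (hC0 : 0 ≤ C)
    (hC : ∀ᵐ ω ∂μ, μ[Y|m] ω ≤ C) :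
    ∫ ω, X ω * Y ω ∂μ ≤ C * ∫ ω, X ω ∂μ := by
  have h := lintegral_ofReal_mul_le_of_condExp_le hm hX hX0 hY0 hY hC
  rw [← ofReal_integral_eq_lintegral_ofReal hX_int (ae_of_all μ hX0), ← ENNReal.ofReal_mul hC0,
    ← ofReal_integral_eq_lintegral_ofReal (integrable_mul_of_condExp_le hm hX hX0 hX_int hY0 hY hC)
      (ae_of_all μ fun ω ↦ mul_nonneg (hX0 ω) (hY0 ω))] at h
  exact (ENNReal.ofReal_le_ofReal_iff (mul_nonneg hC0 (integral_nonneg hX0))).mp h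

end MeasureTheory

namespace ProbabilityTheory

variable {Ω : Type*} {mΩ : MeasurableSpace Ω} {μ : Measure Ω} [IsProbabilityMeasure μ]
  {ℱ : Filtration ℕ mΩ} {Y : ℕ → Ω → ℝ} {C : ℝ}

theorem _root_.MeasureTheory.Filtration.stronglyMeasurable_prod_range
    (hY : ∀ k, StronglyMeasurable[ℱ (k + 1)] (Y k)) (t : ℕ) :
    StronglyMeasurable[ℱ t] fun ω ↦ ∏ k ∈ range t, Y k ω :=
  Finset.stronglyMeasurable_fun_prod _ fun k hk ↦
    (hY k).mono (ℱ.mono (Nat.succ_le_of_lt (mem_range.mp hk)))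

theorem integrable_prod_range_of_condExp_le (hY : ∀ k, StronglyMeasurable[ℱ (k + 1)] (Y k))
    (hY0 : ∀ k, 0 ≤ Y k) (hY_int : ∀ k, Integrable (Y k) μ)
    (hC : ∀ k, ∀ᵐ ω ∂μ, μ[Y k|ℱ k] ω ≤ C) (t : ℕ) :
    Integrable (fun ω ↦ ∏ k ∈ range t, Y k ω) μ := by
  induction t with
  | zero => simp
  | succ t ih =>
    simp_rw [prod_range_succ]
    exact integrable_mul_of_condExp_le (ℱ.le t) (ℱ.stronglyMeasurable_prod_range hY t)
      (fun ω ↦ prod_nonneg fun k _ ↦ hY0 k ω) ih (hY0 t) (hY_int t) (hC t)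

theorem integral_prod_range_le_pow_of_condExp_le (hY : ∀ k, StronglyMeasurable[ℱ (k + 1)] (Y k))
    (hY0 : ∀ k, 0 ≤ Y k) (hY_int : ∀ k, Integrable (Y k) μ) (hC0 : 0 ≤ C)
    (hC : ∀ k, ∀ᵐ ω ∂μ, μ[Y k|ℱ k] ω ≤ C) (t : ℕ) :
    ∫ ω, ∏ k ∈ range t, Y k ω ∂μ ≤ C ^ t := by
  induction t with
  | zero => simp
  | succ t ih =>
    simp_rw [prod_range_succ]
    calc ∫ ω, (∏ k ∈ range t, Y k ω) * Y t ω ∂μ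
        ≤ C * ∫ ω, ∏ k ∈ range t, Y k ω ∂μ :=
          integral_mul_le_of_condExp_le (ℱ.le t) (ℱ.stronglyMeasurable_prod_range hY t)
            (fun ω ↦ prod_nonneg fun k _ ↦ hY0 k ω)
            (integrable_prod_range_of_condExp_le hY hY0 hY_int hC t) (hY0 t) (hY_int t) hC0 (hC t)
      _ ≤ C * C ^ t := by gcongr
      _ = C ^ (t + 1) := (pow_succ' C t).symm

theorem measureReal_sum_range_ge_le_of_condExp_exp_le {Z : ℕ → Ω → ℝ}
    (hZ : ∀ k, Measurable[ℱ (k + 1)] (Z k)) {lam c : ℝ} (hlam : 0 ≤ lam)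
    (hint : ∀ k, Integrable (fun ω ↦ Real.exp (lam * Z k ω)) μ)
    (hcond : ∀ k, ∀ᵐ ω ∂μ, μ[fun ω ↦ Real.exp (lam * Z k ω)|ℱ k] ω ≤ Real.exp c) (t : ℕ) (ε : ℝ) :
    μ.real {ω | ε ≤ ∑ k ∈ range t, Z k ω} ≤ Real.exp (t * c - lam * ε) := by
  have hexp_sum : (fun ω ↦ Real.exp (lam * ∑ k ∈ range t, Z k ω)) =
      fun ω ↦ ∏ k ∈ range t, Real.exp (lam * Z k ω) := by
    funext ω
    rw [mul_sum, Real.exp_sum]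
  have hY : ∀ k, StronglyMeasurable[ℱ (k + 1)] fun ω ↦ Real.exp (lam * Z k ω) := fun k ↦
    (measurable_const.mul (hZ k)).exp.stronglyMeasurable
  have hY0 : ∀ k, 0 ≤ fun ω ↦ Real.exp (lam * Z k ω) := fun k ω ↦ (Real.exp_pos _).le
  calc μ.real {ω | ε ≤ ∑ k ∈ range t, Z k ω}
      ≤ Real.exp (-lam * ε) * mgf (fun ω ↦ ∑ k ∈ range t, Z k ω) μ lam :=
        measure_ge_le_exp_mul_mgf ε hlam <|
          hexp_sum ▸ integrable_prod_range_of_condExp_le hY hY0 hint hcond t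
    _ ≤ Real.exp (-lam * ε) * Real.exp c ^ t := by
        rw [mgf, hexp_sum]
        gcongr
        exact integral_prod_range_le_pow_of_condExp_le hY hY0 hint (Real.exp_pos c).le hcond t
    _ = Real.exp (t * c - lam * ε) := by
        rw [← Real.exp_nat_mul, ← Real.exp_add]
        ring_nf

end ProbabilityTheory

/-- `λ = min (s / 2ν²) (1/b)` is the minimiser of `λ²ν² - λs` over `[0, 1/b]`. -/
theorem chernoff_exponent_le_neg_min {ν b s t lam : ℝ} (hb : 0 < b) (hs : 0 < s) (ht : 0 ≤ t)
    (hlam : lam = min (s / (2 * ν ^ 2)) (1 / b)) :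
    t * (lam ^ 2 * ν ^ 2) - lam * (s * t) ≤
      -min (s ^ 2 * t / (4 * ν ^ 2)) (s * t / (2 * b)) := by
  have hmin : min (s ^ 2 * t / (4 * ν ^ 2)) (s * t / (2 * b)) = lam * (s * t / 2) := by
    rw [hlam, min_mul_of_nonneg _ _ (by positivity)]
    congr 1 <;> ring
  have hlam0 : 0 ≤ lam := hlam ▸ le_min (by positivity) (by positivity)
  have hlamν : lam * ν ^ 2 ≤ s / 2 := calc
    lam * ν ^ 2 ≤ s / (2 * ν ^ 2) * ν ^ 2 := by gcongr; exact hlam ▸ min_le_left _ _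
    _ = s / 2 * (ν ^ 2 / ν ^ 2) := by ring
    _ ≤ s / 2 := mul_le_of_le_one_right (by positivity) (div_self_le_one _)
  rw [hmin]
  nlinarith [mul_le_mul_of_nonneg_left hlamν (mul_nonneg hlam0 ht)]

theorem adaptive_oracle_error_concentration_general
    {Ω : Type*} [mΩ : MeasurableSpace Ω]
    (μ : Measure Ω) [IsProbabilityMeasure μ]
    (ℱ : Filtration ℕ mΩ)
    (Z : ℕ → Ω → ℝ)
    (hZmeas : ∀ k, Measurable[ℱ (k + 1)] (Z k))
    (ν b : ℝ) (hb : 0 < b)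
    (hint : ∀ k, ∀ lam ∈ Set.Icc (0 : ℝ) (1 / b),
      Integrable (fun ω => Real.exp (lam * Z k ω)) μ)
    (hcond : ∀ k, ∀ lam ∈ Set.Icc (0 : ℝ) (1 / b),
      ∀ᵐ ω ∂μ, (μ[fun ω' => Real.exp (lam * Z k ω')|ℱ k]) ω ≤
        Real.exp (lam ^ 2 * ν ^ 2)) :
    ∀ t : ℕ, 1 ≤ t → ∀ s : ℝ, 0 < s →
      μ {ω | s < (1 / (t : ℝ)) * ∑ k ∈ Finset.range t, Z k ω} ≤
        ENNReal.ofReal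
          (Real.exp (-min (s ^ 2 * t / (4 * ν ^ 2)) (s * t / (2 * b)))) := by
  intro t ht s hs
  set lam := min (s / (2 * ν ^ 2)) (1 / b) with hlam
  have hlam_mem : lam ∈ Set.Icc (0 : ℝ) (1 / b) :=
    ⟨le_min (by positivity) (by positivity), min_le_right _ _⟩
  have htpos : (0 : ℝ) < t := by exact_mod_cast ht
  calc μ {ω | s < (1 / (t : ℝ)) * ∑ k ∈ range t, Z k ω}
      ≤ μ {ω | s * t ≤ ∑ k ∈ range t, Z k ω} := measure_mono fun ω hω ↦ by
        rw [Set.mem_ofPred_eq, one_div_mul_eq_div, lt_div_iff₀ htpos] at hω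
        exact hω.le
    _ ≤ ENNReal.ofReal (Real.exp (t * (lam ^ 2 * ν ^ 2) - lam * (s * t))) :=
        (ENNReal.le_ofReal_iff_toReal_le (measure_ne_top _ _) (Real.exp_pos _).le).mpr <|
          measureReal_sum_range_ge_le_of_condExp_exp_le hZmeas hlam_mem.1 (hint · lam hlam_mem)
            (hcond · lam hlam_mem) t (s * t)
    _ ≤ _ := ENNReal.ofReal_le_ofReal <| Real.exp_le_exp.mpr <|
        chernoff_exponent_le_neg_min hb hs htpos.le hlam

/-- Concentration inequality for adaptive oracle errors (Lemma 5.1): under the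
conditional MGF bound `E[exp(λ Z k) | ℱ k] ≤ exp(λ²ν²)` a.s. for `λ ∈ [0, 1/b]`,
the averaged sum satisfies
`P((1/t) ∑_{k<t} Z k > s) ≤ exp(−min{s²t/(4ν²), st/(2b)})`. -/
theorem adaptive_oracle_error_concentration
    {Ω : Type*} [mΩ : MeasurableSpace Ω]
    (μ : Measure Ω) [IsProbabilityMeasure μ]
    (ℱ : Filtration ℕ mΩ)
    (Z : ℕ → Ω → ℝ)
    (hZmeas : ∀ k, Measurable[ℱ (k + 1)] (Z k))
    (ν b : ℝ) (hν : 0 < ν) (hb : 0 < b)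
    (hint : ∀ k, ∀ lam ∈ Set.Icc (0 : ℝ) (1 / b),
      Integrable (fun ω => Real.exp (lam * Z k ω)) μ)
    (hcond : ∀ k, ∀ lam ∈ Set.Icc (0 : ℝ) (1 / b),
      ∀ᵐ ω ∂μ, (μ[fun ω' => Real.exp (lam * Z k ω')|ℱ k]) ω ≤
        Real.exp (lam ^ 2 * ν ^ 2)) :
    ∀ t : ℕ, 1 ≤ t → ∀ s : ℝ, 0 < s →
      μ {ω | s < (1 / (t : ℝ)) * ∑ k ∈ Finset.range t, Z k ω} ≤
        ENNReal.ofReal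
          (Real.exp (-min (s ^ 2 * t / (4 * ν ^ 2)) (s * t / (2 * b)))) :=
  adaptive_oracle_error_concentration_general (mΩ := mΩ) μ ℱ Z hZmeas ν b hb hint hcond
end

section
/- Let (Ω, F, P) be a probability space, let M ≥ 1, and let A_1, …, A_M and B_1, …, B_M be measurable events such that the σ-algebras generated by the pairs {A_m, B_m} are mutually independent across m ∈ {1, …, M}. Suppose there are constants q ∈ (0, 1] and r ∈ [0, 1] with P(A_m) = q and P(A_m ∩ B_m) ≥ q·r for every m. Then P(⋃_{m=1}^M (A_m ∩ B_m)) ≥ r·(1 − (1−q)^M) ≥ r·(1 − e^{−qM}). -/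
open MeasureTheory ProbabilityTheory

/-- Cumulative-success bound for multiple independent trials: if the trials are
mutually independent, each initialization succeeds with probability `q`, and
each joint success has probability at least `q·r`, then
`P(⋃ (A_m ∩ B_m)) ≥ r(1 − (1−q)^M) ≥ r(1 − e^{−qM})`. -/
theorem multi_trial_cumulative_success
    {Ω : Type*} [MeasurableSpace Ω] (μ : Measure Ω) [IsProbabilityMeasure μ]
    (M : ℕ) (hM : 1 ≤ M)
    (A B : Fin M → Set Ω)
    (hA : ∀ m, MeasurableSet (A m)) (hB : ∀ m, MeasurableSet (B m))
    (hindep : iIndep (fun m => MeasurableSpace.generateFrom {A m, B m}) μ)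
    (q r : ℝ) (hq0 : 0 < q) (hq1 : q ≤ 1) (hr0 : 0 ≤ r) (hr1 : r ≤ 1)
    (hAq : ∀ m, μ (A m) = ENNReal.ofReal q)
    (hABqr : ∀ m, ENNReal.ofReal (q * r) ≤ μ (A m ∩ B m)) :
    ENNReal.ofReal (r * (1 - (1 - q) ^ M)) ≤ μ (⋃ m, A m ∩ B m) ∧
      r * (1 - Real.exp (-q * M)) ≤ r * (1 - (1 - q) ^ M) := by
  have hqr0 : 0 ≤ q * r := mul_nonneg hq0.le hr0
  have hqr1 : q * r ≤ 1 := mul_le_one₀ hq1 hr0 hr1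
  set C : Fin M → Set Ω := fun m => A m ∩ B m with hC
  have hCm : ∀ m, MeasurableSet[MeasurableSpace.generateFrom {A m, B m}] (C m) := by
    intro m
    exact (MeasurableSpace.measurableSet_generateFrom (by simp)).inter
      (MeasurableSpace.measurableSet_generateFrom (by simp))
  have hCmeas : ∀ m, MeasurableSet (C m) := fun m => (hA m).inter (hB m)
  -- product formula for intersection of complements
  have hprod : μ (⋂ m, (C m)ᶜ) = ∏ m, μ ((C m)ᶜ) :=
    hindep.meas_iInter (fun m => (hCm m).compl)
  have hcomplC : ∀ m, μ ((C m)ᶜ) ≤ ENNReal.ofReal (1 - q * r) := by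
    intro m
    rw [prob_compl_eq_one_sub (hCmeas m), ENNReal.ofReal_sub _ hqr0, ENNReal.ofReal_one]
    exact tsub_le_tsub_left (hABqr m) 1
  have hInter_le : μ (⋂ m, (C m)ᶜ) ≤ ENNReal.ofReal ((1 - q * r) ^ M) := by
    rw [hprod, ENNReal.ofReal_pow (by linarith)]
    calc ∏ m, μ ((C m)ᶜ) ≤ ∏ _m : Fin M, ENNReal.ofReal (1 - q * r) :=
          Finset.prod_le_prod' (fun m _ => hcomplC m)
      _ = ENNReal.ofReal (1 - q * r) ^ M := by simp
  have hUnion : μ (⋂ m, (C m)ᶜ) = 1 - μ (⋃ m, C m) := by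
    rw [← Set.compl_iUnion, prob_compl_eq_one_sub (MeasurableSet.iUnion hCmeas)]
  have hmain : ENNReal.ofReal (1 - (1 - q * r) ^ M) ≤ μ (⋃ m, C m) := by
    have h1 : (1 : ENNReal) - μ (⋃ m, C m) ≤ ENNReal.ofReal ((1 - q * r) ^ M) := by
      rw [← hUnion]; exact hInter_le
    have h2 : (1 : ENNReal) ≤ ENNReal.ofReal ((1 - q * r) ^ M) + μ (⋃ m, C m) :=
      tsub_le_iff_right.mp h1
    have := tsub_le_iff_left.mpr h2
    calc ENNReal.ofReal (1 - (1 - q * r) ^ M)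
        ≤ 1 - ENNReal.ofReal ((1 - q * r) ^ M) := by
          rw [ENNReal.ofReal_sub _ (pow_nonneg (by linarith) M), ENNReal.ofReal_one]
      _ ≤ μ (⋃ m, C m) := this
  constructor
  · refine le_trans (ENNReal.ofReal_le_ofReal ?_) hmain
    -- r(1-(1-q)^M) ≤ 1-(1-qr)^M by convexity
    have hconv : (1 - q * r) ^ M ≤ (1 - r) * 1 + r * (1 - q) ^ M := by
      have h := (convexOn_pow M).2 (Set.mem_Ici.mpr (by norm_num : (0:ℝ) ≤ 1))
        (Set.mem_Ici.mpr (by linarith : (0:ℝ) ≤ 1 - q)) (by linarith : (0:ℝ) ≤ 1 - r)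
        hr0 (by ring)
      simp only [smul_eq_mul] at h
      have heq : (1 - q * r) = (1 - r) * 1 + r * (1 - q) := by ring
      rw [heq]
      calc ((1 - r) * 1 + r * (1 - q)) ^ M ≤ (1 - r) * 1 ^ M + r * (1 - q) ^ M := h
        _ = (1 - r) * 1 + r * (1 - q) ^ M := by rw [one_pow]
    nlinarith [pow_nonneg (by linarith : (0:ℝ) ≤ 1 - q) M]
  · apply mul_le_mul_of_nonneg_left _ hr0
    have h1 : (1 - q) ^ M ≤ Real.exp (-q) ^ M :=
      pow_le_pow_left₀ (by linarith) (by linarith [Real.add_one_le_exp (-q)]) M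
    rw [← Real.exp_nat_mul] at h1
    have : -q * M = M * (-q) := by ring
    rw [this]
    linarith
end
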